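/- arXiv:1206.0913 — 3 statements merged into one kernel-verified Lean document; each statement's English description precedes it below -/
import Mathlib

section
/- Let the semitopological semigroup G be represented on the complex Banach space X by a bounded semigroup 𝒮 = {S_g : g ∈ G}. If 𝒮 (endowed with the strong operator topology) is right amenable, then there exists a weak right 𝒮-ergodic net in L(X); if 𝒮 is amenable, then there exists a weak 𝒮-ergodic net in L(X). -/
open Filter Topology

set_option maxHeartbeats 1000000
set_option synthInstance.maxHeartbeats 100000

noncomputable section

variable {G X : Type}

/-- The strong operator topology on `X →L[ℂ] X`: the topology induced by the
inclusion into the product `X → X` (pointwise norm convergence). -/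
def sot (X : Type) [NormedAddCommGroup X] [NormedSpace ℂ X] :
    TopologicalSpace (X →L[ℂ] X) :=
  TopologicalSpace.induced (fun T : X →L[ℂ] X => (T : X → X)) inferInstance

section
variable [NormedAddCommGroup X] [NormedSpace ℂ X]

/-- The closure, in the strong operator topology, of the convex hull of a set of operators;
this is `co̅ M`. -/
def sotClosedConvexHull (M : Set (X →L[ℂ] X)) : Set (X →L[ℂ] X) :=
  @closure _ (sot X) (convexHull ℝ M)

/-- A strong right `𝒮`-ergodic net: a net of operators in `co̅ 𝒮` which is strongly right
asymptotically invariant. -/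
def StrongRightErgodicNet {ι : Type} [Preorder ι]
    (S : G → (X →L[ℂ] X)) (A : ι → (X →L[ℂ] X)) : Prop :=
  (∀ α, A α ∈ sotClosedConvexHull (Set.range S)) ∧
  ∀ (x : X) (g : G),
    Tendsto (fun α => ‖A α x - A α (S g x)‖) atTop (nhds 0)

/-- A strong left `𝒮`-ergodic net. -/
def StrongLeftErgodicNet {ι : Type} [Preorder ι]
    (S : G → (X →L[ℂ] X)) (A : ι → (X →L[ℂ] X)) : Prop :=
  (∀ α, A α ∈ sotClosedConvexHull (Set.range S)) ∧
  ∀ (x : X) (g : G),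
    Tendsto (fun α => ‖A α x - S g (A α x)‖) atTop (nhds 0)

/-- A strong `𝒮`-ergodic net: both a strong right and a strong left `𝒮`-ergodic net. -/
def StrongErgodicNet {ι : Type} [Preorder ι]
    (S : G → (X →L[ℂ] X)) (A : ι → (X →L[ℂ] X)) : Prop :=
  StrongRightErgodicNet S A ∧ StrongLeftErgodicNet S A

/-- A weak right `𝒮`-ergodic net: a net of operators in `co̅ 𝒮` which is weakly right
asymptotically invariant (invariance in the weak topology `σ(X,X')`). -/
def WeakRightErgodicNet {ι : Type} [Preorder ι]
    (S : G → (X →L[ℂ] X)) (A : ι → (X →L[ℂ] X)) : Prop :=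
  (∀ α, A α ∈ sotClosedConvexHull (Set.range S)) ∧
  ∀ (x : X) (g : G) (φ : X →L[ℂ] ℂ),
    Tendsto (fun α => φ (A α x - A α (S g x))) atTop (nhds 0)

/-- A weak left `𝒮`-ergodic net. -/
def WeakLeftErgodicNet {ι : Type} [Preorder ι]
    (S : G → (X →L[ℂ] X)) (A : ι → (X →L[ℂ] X)) : Prop :=
  (∀ α, A α ∈ sotClosedConvexHull (Set.range S)) ∧
  ∀ (x : X) (g : G) (φ : X →L[ℂ] ℂ),
    Tendsto (fun α => φ (A α x - S g (A α x))) atTop (nhds 0)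

/-- A weak `𝒮`-ergodic net: both a weak right and a weak left `𝒮`-ergodic net. -/
def WeakErgodicNet {ι : Type} [Preorder ι]
    (S : G → (X →L[ℂ] X)) (A : ι → (X →L[ℂ] X)) : Prop :=
  WeakRightErgodicNet S A ∧ WeakLeftErgodicNet S A

/-- `𝒮 = {S_g : g ∈ G}`, endowed with the strong operator topology and operator
multiplication (note `S_h S_g = S_{g h}`), is right amenable: there is a mean `m` on
`C_b(𝒮)` (a continuous linear functional with `⟨m, 1⟩ = ‖m‖ = 1`) which is right
invariant, i.e. `⟨m, R_T f⟩ = ⟨m, f⟩` for all `T ∈ 𝒮`, where `R_{S_g} f (S_h) = f (S_h S_g)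
= f (S_{g h})`. -/
def RightAmenable [Mul G] (S : G → (X →L[ℂ] X)) : Prop :=
  letI : TopologicalSpace (X →L[ℂ] X) := sot X
  ∃ m : BoundedContinuousFunction (Set.range S) ℂ →L[ℂ] ℂ,
    m (BoundedContinuousFunction.const _ (1 : ℂ)) = 1 ∧ ‖m‖ = 1 ∧
    ∀ (g : G) (f f' : BoundedContinuousFunction (Set.range S) ℂ),
      (∀ h : G, f' ⟨S h, ⟨h, rfl⟩⟩ = f ⟨S (g * h), ⟨g * h, rfl⟩⟩) → m f' = m f

/-- `𝒮 = {S_g : g ∈ G}`, endowed with the strong operator topology, is amenable: there is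
a mean on `C_b(𝒮)` which is both right and left invariant (`L_{S_g} f (S_h) = f (S_g S_h)
= f (S_{h g})`). -/
def Amenable [Mul G] (S : G → (X →L[ℂ] X)) : Prop :=
  letI : TopologicalSpace (X →L[ℂ] X) := sot X
  ∃ m : BoundedContinuousFunction (Set.range S) ℂ →L[ℂ] ℂ,
    m (BoundedContinuousFunction.const _ (1 : ℂ)) = 1 ∧ ‖m‖ = 1 ∧
    (∀ (g : G) (f f' : BoundedContinuousFunction (Set.range S) ℂ),
      (∀ h : G, f' ⟨S h, ⟨h, rfl⟩⟩ = f ⟨S (g * h), ⟨g * h, rfl⟩⟩) → m f' = m f) ∧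
    (∀ (g : G) (f f' : BoundedContinuousFunction (Set.range S) ℂ),
      (∀ h : G, f' ⟨S h, ⟨h, rfl⟩⟩ = f ⟨S (h * g), ⟨h * g, rfl⟩⟩) → m f' = m f)

end

section ErgodicAux

variable [NormedAddCommGroup X] [NormedSpace ℂ X]

/-- The evaluation functional `T ↦ φ (T y)`, as a `ℂ`-linear map on operators. -/
def testL (y : X) (φ : X →L[ℂ] ℂ) : (X →L[ℂ] X) →ₗ[ℂ] ℂ where
  toFun T := φ (T y)
  map_add' T U := by simp
  map_smul' c T := by simp

@[simp] lemma testL_apply (y : X) (φ : X →L[ℂ] ℂ) (T : X →L[ℂ] X) :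
    testL y φ T = φ (T y) := rfl

/-- The evaluation functional as a bounded continuous function on `𝒮`. -/
def testBCF [TopologicalSpace (X →L[ℂ] X)] (S : G → (X →L[ℂ] X)) {C : ℝ}
    (hcont : ∀ y : X, Continuous fun T : Set.range S => (T : X →L[ℂ] X) y)
    (hC : ∀ g, ‖S g‖ ≤ C) (y : X) (φ : X →L[ℂ] ℂ) :
    BoundedContinuousFunction (Set.range S) ℂ :=
  BoundedContinuousFunction.ofNormedAddCommGroup (fun T => φ ((T : X →L[ℂ] X) y))
    (φ.continuous.comp (hcont y)) (‖φ‖ * (C * ‖y‖)) (by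
      rintro ⟨T, g, rfl⟩
      calc ‖φ (S g y)‖ ≤ ‖φ‖ * ‖S g y‖ := φ.le_opNorm _
        _ ≤ ‖φ‖ * (C * ‖y‖) := by
            have h1 : ‖S g y‖ ≤ C * ‖y‖ :=
              ((S g).le_opNorm y).trans (by gcongr; exact hC g)
            exact mul_le_mul_of_nonneg_left h1 (norm_nonneg φ))

@[simp] lemma testBCF_apply [TopologicalSpace (X →L[ℂ] X)] (S : G → (X →L[ℂ] X)) {C : ℝ}
    (hcont : ∀ y : X, Continuous fun T : Set.range S => (T : X →L[ℂ] X) y)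
    (hC : ∀ g, ‖S g‖ ≤ C) (y : X) (φ : X →L[ℂ] ℂ) (T : Set.range S) :
    testBCF S hcont hC y φ T = φ ((T : X →L[ℂ] X) y) := rfl

/-- Key approximation lemma: from a right (or left) invariant mean one obtains, for any
finitely many test functionals killed by the mean, an element of the convex hull of `𝒮`
on which the corresponding linear functionals are uniformly small. -/
lemma key_approx [TopologicalSpace (X →L[ℂ] X)] {S : G → (X →L[ℂ] X)}
    (m : BoundedContinuousFunction (Set.range S) ℂ →L[ℂ] ℂ)
    (hm1 : m (BoundedContinuousFunction.const _ (1 : ℂ)) = 1)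
    (hmn : ‖m‖ ≤ 1)
    {κ : Type} [Fintype κ]
    (d : κ → BoundedContinuousFunction (Set.range S) ℂ)
    (l : κ → ((X →L[ℂ] X) →ₗ[ℂ] ℂ))
    (hcomp : ∀ (j : κ) (T : Set.range S), d j T = l j (T : X →L[ℂ] X))
    (hm0 : ∀ j, m (d j) = 0)
    (ε : ℝ) (hε : 0 < ε) :
    ∃ A ∈ convexHull ℝ (Set.range S), ∀ j, ‖l j A‖ < ε := by
  classical
  by_contra hcon
  push_neg at hcon
  -- the joint evaluation map
  set L : (X →L[ℂ] X) →ₗ[ℝ] (κ → ℂ) :=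
    LinearMap.pi (fun j => (l j).restrictScalars ℝ) with hL
  have hLapp : ∀ (T : X →L[ℂ] X) (j : κ), L T j = l j T := fun T j => rfl
  -- the closed convex set to be separated from 0
  set K : Set (κ → ℂ) := closure (convexHull ℝ (L '' Set.range S)) with hK
  have hKconv : Convex ℝ K := (convex_convexHull ℝ _).closure
  have hKclosed : IsClosed K := isClosed_closure
  have h0K : (0 : κ → ℂ) ∉ K := by
    intro h0
    have hsub : K ⊆ {v : κ → ℂ | ε ≤ ‖v‖} := by
      apply closure_minimal _ (isClosed_le continuous_const continuous_norm)
      rw [← LinearMap.image_convexHull]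
      rintro _ ⟨A, hA, rfl⟩
      obtain ⟨j, hj⟩ := hcon A hA
      exact le_trans hj ((hLapp A j ▸ norm_le_pi_norm (L A) j))
    have := hsub h0
    simp only [Set.mem_setOf_eq, norm_zero] at this
    linarith
  obtain ⟨f, u, hf0, hfK⟩ :=
    RCLike.geometric_hahn_banach_point_closed (𝕜 := ℂ) hKconv hKclosed h0K
  have hu : 0 < u := by simpa using hf0
  -- expand f in coordinates
  set c : κ → ℂ := fun j => f (Pi.single j 1) with hc
  have hf : ∀ v : κ → ℂ, f v = ∑ j, v j * c j := by
    intro v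
    have hv : v = ∑ j, v j • (Pi.single j (1 : ℂ) : κ → ℂ) := by
      simp only [← Pi.single_smul, smul_eq_mul, mul_one, Finset.univ_sum_single]
    conv_lhs => rw [hv]
    simp [map_sum, map_smul, smul_eq_mul, hc]
  -- the combined test function
  set h : BoundedContinuousFunction (Set.range S) ℂ := ∑ j, c j • d j with hh
  have hmh : m h = 0 := by
    simp [hh, map_sum, map_smul, hm0, smul_eq_mul]
  have hhT : ∀ T : Set.range S, h T = f (L (T : X →L[ℂ] X)) := by
    intro T
    rw [hf]
    simp only [hh, BoundedContinuousFunction.coe_sum, Finset.sum_apply,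
      BoundedContinuousFunction.coe_smul, Pi.smul_apply, smul_eq_mul, hcomp, hLapp]
    exact Finset.sum_congr rfl fun j _ => mul_comm _ _
  have huT : ∀ T : Set.range S, u < (h T).re := by
    rintro ⟨T, g, rfl⟩
    have hmem : L (S g) ∈ K :=
      subset_closure (subset_convexHull ℝ _ ⟨S g, ⟨g, rfl⟩, rfl⟩)
    have := hfK _ hmem
    rw [hhT ⟨S g, ⟨g, rfl⟩⟩]
    simpa using this
  -- the disc argument
  set B : ℝ := ‖h‖ with hB
  have hB0 : 0 ≤ B := norm_nonneg _
  set μ : ℝ := max B ((u ^ 2 + B ^ 2) / (2 * u) + 1) with hμ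
  have hμB : B ≤ μ := le_max_left _ _
  have hμ2 : (u ^ 2 + B ^ 2) / (2 * u) + 1 ≤ μ := le_max_right _ _
  have hμ0 : 0 ≤ μ := hB0.trans hμB
  set ψ : BoundedContinuousFunction (Set.range S) ℂ :=
    h - (μ : ℂ) • BoundedContinuousFunction.const _ (1 : ℂ) with hψ
  have hmψ : m ψ = -(μ : ℂ) := by
    simp [hψ, map_sub, map_smul, hmh, hm1, smul_eq_mul]
  have hψnorm : ‖ψ‖ ≤ Real.sqrt ((μ - u) ^ 2 + B ^ 2) := by
    apply BoundedContinuousFunction.norm_le (Real.sqrt_nonneg _) |>.mpr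
    intro T
    have hT1 : ψ T = h T - (μ : ℂ) := by
      simp [hψ]
    rw [hT1, Real.le_sqrt (norm_nonneg _) (by positivity)]
    have hre : |(h T).re| ≤ B := (Complex.abs_re_le_norm _).trans
      (BoundedContinuousFunction.norm_coe_le_norm h T)
    have him : |(h T).im| ≤ B := (Complex.abs_im_le_norm _).trans
      (BoundedContinuousFunction.norm_coe_le_norm h T)
    have hu' := huT T
    have hsq : ‖h T - (μ : ℂ)‖ ^ 2 = ((h T).re - μ) ^ 2 + (h T).im ^ 2 := by
      rw [Complex.sq_norm, Complex.normSq_apply]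
      simp [Complex.sub_re, Complex.sub_im, Complex.ofReal_re, Complex.ofReal_im]
      ring
    rw [hsq]
    have h1 : (h T).re ≤ B := (abs_le.mp hre).2
    have h2 : -B ≤ (h T).im := (abs_le.mp him).1
    have h3 : (h T).im ≤ B := (abs_le.mp him).2
    nlinarith
  have hfinal : μ ≤ Real.sqrt ((μ - u) ^ 2 + B ^ 2) := by
    have h1 : ‖m ψ‖ = μ := by
      rw [hmψ]
      simp [abs_of_nonneg hμ0]
    calc μ = ‖m ψ‖ := h1.symm
      _ ≤ ‖m‖ * ‖ψ‖ := m.le_opNorm ψ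
      _ ≤ 1 * ‖ψ‖ := by
          exact mul_le_mul_of_nonneg_right hmn (norm_nonneg _)
      _ = ‖ψ‖ := one_mul _
      _ ≤ _ := hψnorm
  have hfinal2 : μ ^ 2 ≤ (μ - u) ^ 2 + B ^ 2 :=
    (Real.le_sqrt hμ0 (by positivity)).mp hfinal
  have h2u : (0 : ℝ) < 2 * u := by linarith
  have hxx : u ^ 2 + B ^ 2 ≤ (μ - 1) * (2 * u) := by
    rw [← div_le_iff₀ h2u]
    linarith
  nlinarith

/-- From finite-stage approximate invariance, build a net indexed by
`Finset Tr × ℕ`. -/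
lemma exists_net {Tr : Type} {SS : Set (X →L[ℂ] X)}
    (Q : Tr → (X →L[ℂ] X) → ℝ) (hQ : ∀ p A, 0 ≤ Q p A)
    (H : ∀ (s : Finset Tr) (ε : ℝ), 0 < ε → ∃ A ∈ SS, ∀ p ∈ s, Q p A < ε) :
    ∃ A : Finset Tr × ℕ → (X →L[ℂ] X), (∀ α, A α ∈ SS) ∧
      ∀ p : Tr, Tendsto (fun α => Q p (A α)) atTop (nhds 0) := by
  choose A hA hA2 using fun α : Finset Tr × ℕ => H α.1 (1 / (α.2 + 1)) (by positivity)
  refine ⟨A, hA, fun p => ?_⟩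
  refine Metric.tendsto_nhds.mpr fun ε hε => ?_
  obtain ⟨N, hN⟩ := exists_nat_one_div_lt hε
  filter_upwards [Filter.mem_atTop (({p}, N) : Finset Tr × ℕ)] with α hα
  have hp : p ∈ α.1 := Finset.singleton_subset_iff.mp hα.1
  have h1 : Q p (A α) < 1 / (α.2 + 1) := hA2 α p hp
  have h2 : (1 : ℝ) / (α.2 + 1) ≤ 1 / (N + 1) := by
    apply one_div_le_one_div_of_le (by positivity)
    have := hα.2
    exact_mod_cast Nat.succ_le_succ this
  rw [Real.dist_eq, sub_zero, abs_of_nonneg (hQ p (A α))]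
  linarith

end ErgodicAux


/-- Let the semitopological semigroup `G` be represented on the complex
Banach space `X` by a bounded semigroup `𝒮 = {S_g : g ∈ G}`. If `𝒮` (with the strong
operator topology) is right amenable, then there exists a weak right `𝒮`-ergodic net in
`L(X)`; if `𝒮` is amenable, then there exists a weak `𝒮`-ergodic net in `L(X)`. -/
theorem exists_weak_ergodic_net_of_amenable
    {G X : Type} [Semigroup G] [TopologicalSpace G]
    [NormedAddCommGroup X] [NormedSpace ℂ X] [CompleteSpace X]
    (S : G → (X →L[ℂ] X))
    (hGcont₁ : ∀ g : G, Continuous fun h : G => g * h)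
    (hGcont₂ : ∀ g : G, Continuous fun h : G => h * g)
    (hbdd : ∃ C : ℝ, ∀ g : G, ‖S g‖ ≤ C)
    (hmul : ∀ g h : G, (S g).comp (S h) = S (h * g))
    (hScont : ∀ x : X, Continuous fun g : G => S g x) :
    (RightAmenable S →
      ∃ (ι : Type) (_ : Preorder ι) (A : ι → (X →L[ℂ] X)),
        Nonempty ι ∧ IsDirected ι (· ≤ ·) ∧ WeakRightErgodicNet S A) ∧
    (Amenable S →
      ∃ (ι : Type) (_ : Preorder ι) (A : ι → (X →L[ℂ] X)),
        Nonempty ι ∧ IsDirected ι (· ≤ ·) ∧ WeakErgodicNet S A) := by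
    classical
  obtain ⟨C, hC⟩ := hbdd
  letI : TopologicalSpace (X →L[ℂ] X) := sot X
  have hcont : ∀ y : X, Continuous fun T : Set.range S => (T : X →L[ℂ] X) y := by
    intro y
    have h1 : Continuous fun T : X →L[ℂ] X => (T : X → X) := continuous_induced_dom
    exact ((continuous_apply y).comp h1).comp continuous_subtype_val
  have hdir : IsDirected (Finset (X × G × (X →L[ℂ] ℂ)) × ℕ) (· ≤ ·) :=
    ⟨fun a b => ⟨(a.1 ∪ b.1, max a.2 b.2),
      ⟨Finset.subset_union_left, le_max_left _ _⟩,
      ⟨Finset.subset_union_right, le_max_right _ _⟩⟩⟩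
  have hmem : ∀ A ∈ convexHull ℝ (Set.range S), A ∈ sotClosedConvexHull (Set.range S) :=
    fun A hA => subset_closure hA
  have hinvR : ∀ (m : BoundedContinuousFunction (Set.range S) ℂ →L[ℂ] ℂ),
      (∀ (g : G) (f f' : BoundedContinuousFunction (Set.range S) ℂ),
        (∀ h : G, f' ⟨S h, ⟨h, rfl⟩⟩ = f ⟨S (g * h), ⟨g * h, rfl⟩⟩) → m f' = m f) →
      ∀ (x : X) (g : G) (φ : X →L[ℂ] ℂ),
        m (testBCF S hcont hC x φ - testBCF S hcont hC (S g x) φ) = 0 := by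
    intro m hinv x g φ
    rw [map_sub, sub_eq_zero]
    refine (hinv g (testBCF S hcont hC x φ) (testBCF S hcont hC (S g x) φ) ?_).symm
    intro h
    simp only [testBCF_apply]
    rw [← hmul h g]
    rfl
  have hinvL : ∀ (m : BoundedContinuousFunction (Set.range S) ℂ →L[ℂ] ℂ),
      (∀ (g : G) (f f' : BoundedContinuousFunction (Set.range S) ℂ),
        (∀ h : G, f' ⟨S h, ⟨h, rfl⟩⟩ = f ⟨S (h * g), ⟨h * g, rfl⟩⟩) → m f' = m f) →
      ∀ (x : X) (g : G) (φ : X →L[ℂ] ℂ),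
        m (testBCF S hcont hC x (φ.comp (S g)) - testBCF S hcont hC x φ) = 0 := by
    intro m hinv x g φ
    rw [map_sub, sub_eq_zero]
    refine hinv g (testBCF S hcont hC x φ) (testBCF S hcont hC x (φ.comp (S g))) ?_
    intro h
    simp only [testBCF_apply]
    rw [← hmul g h]
    rfl
  constructor
  · intro hRA
    obtain ⟨m, hm1, hmn, hinv⟩ := hRA
    set Q : (X × G × (X →L[ℂ] ℂ)) → (X →L[ℂ] X) → ℝ :=
      fun p A => ‖p.2.2 (A p.1 - A (S p.2.1 p.1))‖ with hQdef
    have Hfin : ∀ (s : Finset (X × G × (X →L[ℂ] ℂ))) (ε : ℝ), 0 < ε →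
        ∃ A ∈ convexHull ℝ (Set.range S), ∀ p ∈ s, Q p A < ε := by
      intro s ε hε
      obtain ⟨A, hA, hAj⟩ := key_approx m hm1 (le_of_eq hmn)
        (fun j : s => testBCF S hcont hC (j : X × G × (X →L[ℂ] ℂ)).1
            (j : X × G × (X →L[ℂ] ℂ)).2.2
          - testBCF S hcont hC (S (j : X × G × (X →L[ℂ] ℂ)).2.1
            (j : X × G × (X →L[ℂ] ℂ)).1) (j : X × G × (X →L[ℂ] ℂ)).2.2)
        (fun j : s => testL (j : X × G × (X →L[ℂ] ℂ)).1 (j : X × G × (X →L[ℂ] ℂ)).2.2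
          - testL (S (j : X × G × (X →L[ℂ] ℂ)).2.1 (j : X × G × (X →L[ℂ] ℂ)).1)
            (j : X × G × (X →L[ℂ] ℂ)).2.2)
        (by intro j T; simp)
        (fun j => hinvR m hinv _ _ _)
        ε hε
      refine ⟨A, hA, fun p hp => ?_⟩
      have h := hAj ⟨p, hp⟩
      simpa [hQdef, map_sub] using h
    obtain ⟨A, hA1, hA2⟩ := exists_net Q (fun p A => norm_nonneg _) Hfin
    refine ⟨_, inferInstance, A, ⟨(∅, 0)⟩, hdir,
      ⟨fun α => hmem _ (hA1 α), fun x g φ => ?_⟩⟩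
    exact tendsto_zero_iff_norm_tendsto_zero.mpr (hA2 (x, g, φ))
  · intro hAm
    obtain ⟨m, hm1, hmn, hinv1, hinv2⟩ := hAm
    set Q : (X × G × (X →L[ℂ] ℂ)) → (X →L[ℂ] X) → ℝ := fun p A =>
      max ‖p.2.2 (A p.1 - A (S p.2.1 p.1))‖ ‖p.2.2 (A p.1 - S p.2.1 (A p.1))‖ with hQdef
    have Hfin : ∀ (s : Finset (X × G × (X →L[ℂ] ℂ))) (ε : ℝ), 0 < ε →
        ∃ A ∈ convexHull ℝ (Set.range S), ∀ p ∈ s, Q p A < ε := by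
      intro s ε hε
      obtain ⟨A, hA, hAj⟩ := key_approx m hm1 (le_of_eq hmn)
        (Sum.elim
          (fun j : s => testBCF S hcont hC (j : X × G × (X →L[ℂ] ℂ)).1
              (j : X × G × (X →L[ℂ] ℂ)).2.2
            - testBCF S hcont hC (S (j : X × G × (X →L[ℂ] ℂ)).2.1
              (j : X × G × (X →L[ℂ] ℂ)).1) (j : X × G × (X →L[ℂ] ℂ)).2.2)
          (fun j : s => testBCF S hcont hC (j : X × G × (X →L[ℂ] ℂ)).1
              ((j : X × G × (X →L[ℂ] ℂ)).2.2.comp (S (j : X × G × (X →L[ℂ] ℂ)).2.1))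
            - testBCF S hcont hC (j : X × G × (X →L[ℂ] ℂ)).1
              (j : X × G × (X →L[ℂ] ℂ)).2.2))
        (Sum.elim
          (fun j : s => testL (j : X × G × (X →L[ℂ] ℂ)).1 (j : X × G × (X →L[ℂ] ℂ)).2.2
            - testL (S (j : X × G × (X →L[ℂ] ℂ)).2.1 (j : X × G × (X →L[ℂ] ℂ)).1)
              (j : X × G × (X →L[ℂ] ℂ)).2.2)
          (fun j : s => testL (j : X × G × (X →L[ℂ] ℂ)).1
              ((j : X × G × (X →L[ℂ] ℂ)).2.2.comp (S (j : X × G × (X →L[ℂ] ℂ)).2.1))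
            - testL (j : X × G × (X →L[ℂ] ℂ)).1 (j : X × G × (X →L[ℂ] ℂ)).2.2))
        (by rintro (j | j) T <;> simp)
        (by rintro (j | j)
            · exact hinvR m hinv1 _ _ _
            · exact hinvL m hinv2 _ _ _)
        ε hε
      refine ⟨A, hA, fun p hp => ?_⟩
      have hr := hAj (Sum.inl ⟨p, hp⟩)
      have hl := hAj (Sum.inr ⟨p, hp⟩)
      rw [hQdef]
      refine max_lt ?_ ?_
      · simpa [map_sub] using hr
      · have h2 : p.2.2 (A p.1 - S p.2.1 (A p.1)) =
            -((testL p.1 (p.2.2.comp (S p.2.1)) - testL p.1 p.2.2) A) := by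
          simp [map_sub]
        rw [h2, norm_neg]
        simpa [map_sub] using hl
    obtain ⟨A, hA1, hA2⟩ := exists_net Q (fun p A => le_max_of_le_left (norm_nonneg _)) Hfin
    refine ⟨_, inferInstance, A, ⟨(∅, 0)⟩, hdir,
      ⟨⟨fun α => hmem _ (hA1 α), fun x g φ => ?_⟩,
       ⟨fun α => hmem _ (hA1 α), fun x g φ => ?_⟩⟩⟩
    · exact tendsto_zero_iff_norm_tendsto_zero.mpr
        (squeeze_zero (fun α => norm_nonneg _) (fun α => le_max_left _ _) (hA2 (x, g, φ)))
    · exact tendsto_zero_iff_norm_tendsto_zero.mpr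
        (squeeze_zero (fun α => norm_nonneg _) (fun α => le_max_right _ _) (hA2 (x, g, φ)))
end
end

section
/- Let X be a complex Banach space and S ∈ L(X) with ‖S‖ ≤ 1, and for each λ in the unit circle 𝕋 consider the representation 𝒮_λ = {(λS)^n : n ∈ ℕ} of the semigroup (ℕ,+) on X. Then the family of Abel means {((1−r) ∑_{n=0}^{∞} r^n λ^n S^n)_{0<r<1} : λ ∈ 𝕋}, where the parameter interval (0,1) is directed towards 1, is a uniform family of ergodic nets. -/
open Filter Topology

noncomputable section

/-- A uniform family `{(A_α^{𝒮_i})_{α ∈ ι} : i ∈ I}` of **right** ergodic nets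
(Definition 2.1): (1) each `A_α^{𝒮_i}` can be approximated, uniformly in `i` and on
finitely many vectors, by convex combinations `∑_j c_{i,j} S_{i,g_j}` with the *same*
`g_1, …, g_N` for all `i`; (2) `limsup_α sup_i ‖A_α^{𝒮_i} x - A_α^{𝒮_i} S_{i,g} x‖ = 0`. -/
def UniformFamilyRightErgodic {I G ι X : Type} [Preorder ι]
    [NormedAddCommGroup X] [NormedSpace ℂ X]
    (S : I → G → (X →L[ℂ] X)) (A : I → ι → (X →L[ℂ] X)) : Prop :=
  (∀ (α : ι) (ε : ℝ), 0 < ε → ∀ (m : ℕ) (xs : Fin m → X),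
      ∃ (N : ℕ) (g : Fin N → G) (c : I → Fin N → ℝ),
        (∀ i j, 0 ≤ c i j) ∧ (∀ i, ∑ j, c i j = 1) ∧
        ∀ (i : I) (k : Fin m),
          ‖A i α (xs k) - ∑ j, c i j • S i (g j) (xs k)‖ < ε) ∧
  (∀ (g : G) (x : X),
      Tendsto (fun α : ι => ⨆ i : I, ‖A i α x - A i α (S i g x)‖) atTop (nhds 0))

/-- A uniform family of ergodic nets: a uniform family of right ergodic nets which in
addition satisfies `limsup_α sup_i ‖A_α^{𝒮_i} x - S_{i,g} A_α^{𝒮_i} x‖ = 0`. -/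
def UniformFamilyErgodic {I G ι X : Type} [Preorder ι]
    [NormedAddCommGroup X] [NormedSpace ℂ X]
    (S : I → G → (X →L[ℂ] X)) (A : I → ι → (X →L[ℂ] X)) : Prop :=
  UniformFamilyRightErgodic S A ∧
  ∀ (g : G) (x : X),
    Tendsto (fun α : ι => ⨆ i : I, ‖A i α x - S i g (A i α x)‖) atTop (nhds 0)

set_option linter.unusedSectionVars false
set_option maxHeartbeats 1600000

section AuxAbel
variable {X : Type} [NormedAddCommGroup X] [NormedSpace ℂ X] [CompleteSpace X]

lemma auxA_norm_pow {T : X →L[ℂ] X} (hT : ‖T‖ ≤ 1) (n : ℕ) : ‖T ^ n‖ ≤ 1 := by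
  induction n with
  | zero => simpa [ContinuousLinearMap.one_def] using ContinuousLinearMap.norm_id_le (E := X)
  | succ n ih =>
      rw [pow_succ]
      exact le_trans (norm_mul_le _ _) (by nlinarith [norm_nonneg (T ^ n)])

lemma auxA_pow_apply_le {T : X →L[ℂ] X} (hT : ‖T‖ ≤ 1) (n : ℕ) (x : X) :
    ‖(T ^ n) x‖ ≤ ‖x‖ := by
  have h1 := (T ^ n).le_opNorm x
  have h2 := auxA_norm_pow hT n
  nlinarith [norm_nonneg x]

lemma auxA_summable_op {T : X →L[ℂ] X} (hT : ‖T‖ ≤ 1) {r : ℝ} (h0 : 0 < r) (h1 : r < 1) :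
    Summable (fun n : ℕ => r ^ n • T ^ n) := by
  refine Summable.of_norm (Summable.of_nonneg_of_le (fun n => norm_nonneg _) (fun n => ?_)
    (summable_geometric_of_lt_one h0.le h1))
  refine le_trans (norm_smul_le (β := X →L[ℂ] X) (r ^ n) (T ^ n)) ?_
  rw [Real.norm_eq_abs, abs_of_nonneg (by positivity)]
  nlinarith [auxA_norm_pow hT n, pow_nonneg h0.le n]

lemma auxA_summable_vec {T : X →L[ℂ] X} (hT : ‖T‖ ≤ 1) {c : ℕ → ℝ} (hc : Summable c)
    (p : ℕ → ℕ) (x : X) : Summable (fun n : ℕ => c n • (T ^ p n) x) := by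
  refine Summable.of_norm (Summable.of_nonneg_of_le (fun n => norm_nonneg _) (fun n => ?_)
    (hc.abs.mul_right ‖x‖))
  refine le_trans (norm_smul_le (β := X) (c n) ((T ^ p n) x)) ?_
  rw [Real.norm_eq_abs]
  have := auxA_pow_apply_le hT (p n) x
  nlinarith [abs_nonneg (c n), norm_nonneg ((T ^ p n) x)]

lemma auxA_apply {T : X →L[ℂ] X} (hT : ‖T‖ ≤ 1) {r : ℝ} (h0 : 0 < r) (h1 : r < 1) (x : X) :
    ((1 - r) • ∑' n : ℕ, r ^ n • T ^ n) x = ∑' n : ℕ, ((1 - r) * r ^ n) • (T ^ n) x := by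
  have h := (ContinuousLinearMap.apply ℂ X x).map_tsum (auxA_summable_op hT h0 h1)
  simp only [ContinuousLinearMap.apply_apply, ContinuousLinearMap.smul_apply] at h
  rw [ContinuousLinearMap.smul_apply, h]
  rw [← Summable.tsum_const_smul (1 - r)
    (auxA_summable_vec hT (summable_geometric_of_lt_one h0.le h1) (fun n => n) x)]
  exact tsum_congr fun n => by simp [smul_smul]

lemma auxA_tsum_bound {T : X →L[ℂ] X} (hT : ‖T‖ ≤ 1) {c d : ℕ → ℝ} (hc : Summable c)
    (hd : ∀ n, |d n| ≤ c n) (p : ℕ → ℕ) (x : X) :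
    ‖∑' n : ℕ, d n • (T ^ p n) x‖ ≤ (∑' n : ℕ, c n) * ‖x‖ := by
  have hnorm : ∀ n, ‖d n • (T ^ p n) x‖ ≤ c n * ‖x‖ := fun n => by
    refine le_trans (norm_smul_le (β := X) _ _) ?_
    rw [Real.norm_eq_abs]
    have h1 := auxA_pow_apply_le hT (p n) x
    have h2 := hd n
    nlinarith [abs_nonneg (d n), norm_nonneg x, norm_nonneg ((T ^ p n) x)]
  have hsn : Summable (fun n => ‖d n • (T ^ p n) x‖) :=
    Summable.of_nonneg_of_le (fun n => norm_nonneg _) hnorm (hc.mul_right ‖x‖)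
  calc ‖∑' n : ℕ, d n • (T ^ p n) x‖ ≤ ∑' n, ‖d n • (T ^ p n) x‖ := norm_tsum_le_tsum_norm hsn
    _ ≤ ∑' n, c n * ‖x‖ := Summable.tsum_le_tsum hnorm hsn (hc.mul_right ‖x‖)
    _ = (∑' n, c n) * ‖x‖ := tsum_mul_right

lemma auxA_onestep {T : X →L[ℂ] X} (hT : ‖T‖ ≤ 1) {r : ℝ} (h0 : 0 < r) (h1 : r < 1) (y : X) :
    ‖(∑' n : ℕ, ((1 - r) * r ^ n) • (T ^ n) y)
      - ∑' n : ℕ, ((1 - r) * r ^ n) • (T ^ n) (T y)‖ ≤ 2 * (1 - r) * ‖y‖ := by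
  have hgeo := summable_geometric_of_lt_one h0.le h1
  have hr1 : (0:ℝ) < 1 - r := by linarith
  have hkey : ∀ n : ℕ, (T ^ n) (T y) = (T ^ (n + 1)) y := fun n => by
    rw [pow_succ, ContinuousLinearMap.mul_apply]
  have hs2 : Summable (fun n : ℕ => ((1 - r) * r ^ n) • (T ^ (n + 1)) y) :=
    auxA_summable_vec hT (hgeo.mul_left _) (fun n => n + 1) y
  have hc3 : Summable (fun n : ℕ => (1 - r) * r ^ (n + 1)) :=
    ((hgeo.mul_left ((1 - r) * r)).congr fun n => by ring)
  have hs3 : Summable (fun n : ℕ => ((1 - r) * r ^ (n + 1)) • (T ^ (n + 1)) y) :=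
    auxA_summable_vec hT hc3 (fun n => n + 1) y
  rw [show (∑' n : ℕ, ((1 - r) * r ^ n) • (T ^ n) (T y))
      = ∑' n : ℕ, ((1 - r) * r ^ n) • (T ^ (n + 1)) y from tsum_congr fun n => by rw [hkey]]
  rw [Summable.tsum_eq_zero_add (auxA_summable_vec hT (hgeo.mul_left _) (fun n => n) y)]
  rw [add_sub_assoc, ← Summable.tsum_sub hs3 hs2]
  rw [tsum_congr (fun n : ℕ => (sub_smul ((1 - r) * r ^ (n + 1)) ((1 - r) * r ^ n)
    ((T ^ (n + 1)) y)).symm)]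
  refine le_trans (norm_add_le _ _) ?_
  have b1 : ‖((1 - r) * r ^ 0) • (T ^ 0) y‖ ≤ (1 - r) * ‖y‖ := by
    rw [pow_zero, pow_zero, ContinuousLinearMap.one_apply, mul_one]
    refine le_trans (norm_smul_le (β := X) _ _) (le_of_eq ?_)
    rw [Real.norm_eq_abs, abs_of_nonneg hr1.le]
  have b2 : ‖∑' n : ℕ, ((1 - r) * r ^ (n + 1) - (1 - r) * r ^ n) • (T ^ (n + 1)) y‖
      ≤ (1 - r) * ‖y‖ := by
    have hd : ∀ n : ℕ, |(1 - r) * r ^ (n + 1) - (1 - r) * r ^ n| ≤ ((1 - r) * (1 - r)) * r ^ n := by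
      intro n
      have hle : r ^ (n + 1) ≤ r ^ n := pow_le_pow_of_le_one h0.le h1.le (Nat.le_succ n)
      rw [abs_of_nonpos (by nlinarith [mul_nonneg hr1.le (sub_nonneg.2 hle)])]
      have : r ^ (n + 1) = r * r ^ n := by ring
      rw [this]; nlinarith [pow_nonneg h0.le n]
    have hb := auxA_tsum_bound hT (c := fun n => ((1 - r) * (1 - r)) * r ^ n)
      (hgeo.mul_left _) (d := fun n => (1 - r) * r ^ (n + 1) - (1 - r) * r ^ n)
      hd (fun n => n + 1) y
    refine le_trans hb (le_of_eq ?_)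
    rw [tsum_mul_left, tsum_geometric_of_lt_one h0.le h1]
    field_simp
  linarith

lemma auxA_pstep {T : X →L[ℂ] X} (hT : ‖T‖ ≤ 1) {r : ℝ} (h0 : 0 < r) (h1 : r < 1)
    (p : ℕ) (x : X) :
    ‖(∑' n : ℕ, ((1 - r) * r ^ n) • (T ^ n) x)
      - ∑' n : ℕ, ((1 - r) * r ^ n) • (T ^ n) ((T ^ p) x)‖ ≤ p * (2 * (1 - r) * ‖x‖) := by
  set F : ℕ → X := fun k => ∑' n : ℕ, ((1 - r) * r ^ n) • (T ^ n) ((T ^ k) x) with hF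
  have h0F : (∑' n : ℕ, ((1 - r) * r ^ n) • (T ^ n) x) = F 0 := by
    simp [hF, pow_zero, ContinuousLinearMap.one_apply]
  rw [h0F, ← Finset.sum_range_sub' F p]
  refine le_trans (norm_sum_le _ _) ?_
  have hterm : ∀ k, ‖F k - F (k + 1)‖ ≤ 2 * (1 - r) * ‖x‖ := by
    intro k
    have hk : ∀ n : ℕ, (T ^ n) ((T ^ (k + 1)) x) = (T ^ n) (T ((T ^ k) x)) := fun n => by
      rw [pow_succ', ContinuousLinearMap.mul_apply]
    have := auxA_onestep hT h0 h1 ((T ^ k) x)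
    have hFk : F (k + 1) = ∑' n : ℕ, ((1 - r) * r ^ n) • (T ^ n) (T ((T ^ k) x)) :=
      tsum_congr fun n => by rw [hk]
    rw [hFk]
    refine le_trans this ?_
    have := auxA_pow_apply_le hT k x
    nlinarith [norm_nonneg ((T ^ k) x)]
  refine le_trans (Finset.sum_le_sum (fun k _ => hterm k)) ?_
  rw [Finset.sum_const, Finset.card_range, nsmul_eq_mul]

lemma auxA_comm {T : X →L[ℂ] X} (hT : ‖T‖ ≤ 1) {r : ℝ} (h0 : 0 < r) (h1 : r < 1)
    (p : ℕ) (x : X) :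
    (∑' n : ℕ, ((1 - r) * r ^ n) • (T ^ n) ((T ^ p) x))
      = (T ^ p) (∑' n : ℕ, ((1 - r) * r ^ n) • (T ^ n) x) := by
  have hgeo := summable_geometric_of_lt_one h0.le h1
  rw [(T ^ p).map_tsum (auxA_summable_vec hT (hgeo.mul_left _) (fun n => n) x)]
  refine tsum_congr fun n => ?_
  rw [ContinuousLinearMap.map_smul_of_tower]
  congr 1
  rw [← ContinuousLinearMap.mul_apply, ← ContinuousLinearMap.mul_apply, pow_mul_comm]

lemma auxA_tendsto_sub :
    Tendsto (fun r : {r : ℝ // 0 < r ∧ r < 1} => 1 - r.1) atTop (nhds 0) := by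
  haveI : Nonempty {r : ℝ // 0 < r ∧ r < 1} := ⟨⟨1/2, by norm_num⟩⟩
  have h : Tendsto (fun r : {r : ℝ // 0 < r ∧ r < 1} => r.1) atTop (nhds 1) := by
    refine tendsto_order.2 ⟨fun a ha => ?_, fun b hb => Eventually.of_forall fun r => lt_trans r.2.2 hb⟩
    refine eventually_atTop.2 ⟨⟨max ((a+1)/2) (1/2),
      ⟨lt_of_lt_of_le (by norm_num) (le_max_right _ _), max_lt (by linarith) (by norm_num)⟩⟩,
      fun r hr => ?_⟩
    have h2 : max ((a+1)/2) (1/2) ≤ r.1 := hr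
    have h3 : a < (a+1)/2 := by linarith
    exact lt_of_lt_of_le h3 (le_trans (le_max_left _ _) h2)
  have := tendsto_const_nhds (x := (1:ℝ)) (f := atTop (α := {r : ℝ // 0 < r ∧ r < 1})) |>.sub h
  simpa using this
end AuxAbel

/-- Proposition 2.2 (b). For a contraction `S` on a complex Banach
space `X` and the representations `𝒮_λ = {(λS)^n : n ∈ ℕ}` of `(ℕ,+)`, `λ ∈ 𝕋`, the Abel
means `(1-r) ∑_{n=0}^∞ r^n λ^n S^n`, `0 < r < 1` (directed towards `1`), form a uniform
family of ergodic nets. -/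
theorem abel_uniformFamilyErgodic
    {X : Type} [NormedAddCommGroup X] [NormedSpace ℂ X] [CompleteSpace X]
    (S : X →L[ℂ] X) (hS : ‖S‖ ≤ 1) :
    UniformFamilyErgodic
      (fun (l : {l : ℂ // ‖l‖ = 1}) (n : ℕ) => (l.1 • S) ^ n)
      (fun (l : {l : ℂ // ‖l‖ = 1}) (r : {r : ℝ // 0 < r ∧ r < 1}) =>
        (1 - r.1) • ∑' n : ℕ, r.1 ^ n • (l.1 • S) ^ n) := by
  haveI : Nonempty {l : ℂ // ‖l‖ = 1} := ⟨⟨1, by norm_num⟩⟩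
  have hTl : ∀ l : {l : ℂ // ‖l‖ = 1}, ‖l.1 • S‖ ≤ 1 := fun l => by
    refine le_trans (norm_smul_le (β := X →L[ℂ] X) l.1 S) ?_
    rw [l.2, one_mul]; exact hS
  have key : ∀ (p : ℕ) (x : X) (l : {l : ℂ // ‖l‖ = 1}) (r : {r : ℝ // 0 < r ∧ r < 1}),
      ‖((1 - r.1) • ∑' n : ℕ, r.1 ^ n • (l.1 • S) ^ n) x
        - ((1 - r.1) • ∑' n : ℕ, r.1 ^ n • (l.1 • S) ^ n) (((l.1 • S) ^ p) x)‖
        ≤ p * (2 * (1 - r.1) * ‖x‖) := by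
    intro p x l r
    rw [auxA_apply (hTl l) r.2.1 r.2.2, auxA_apply (hTl l) r.2.1 r.2.2]
    exact auxA_pstep (hTl l) r.2.1 r.2.2 p x
  have tend : ∀ (p : ℕ) (x : X),
      Tendsto (fun r : {r : ℝ // 0 < r ∧ r < 1} => ⨆ l : {l : ℂ // ‖l‖ = 1},
        ‖((1 - r.1) • ∑' n : ℕ, r.1 ^ n • (l.1 • S) ^ n) x
          - ((1 - r.1) • ∑' n : ℕ, r.1 ^ n • (l.1 • S) ^ n) (((l.1 • S) ^ p) x)‖)
        atTop (nhds 0) := by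
    intro p x
    refine squeeze_zero (fun r => Real.iSup_nonneg fun l => norm_nonneg _)
      (fun r => ciSup_le fun l => key p x l r) ?_
    have h := auxA_tendsto_sub.mul_const ((p : ℝ) * 2 * ‖x‖)
    rw [zero_mul] at h
    have heq : (fun r : {r : ℝ // 0 < r ∧ r < 1} => (p : ℝ) * (2 * (1 - r.1) * ‖x‖))
        = fun r : {r : ℝ // 0 < r ∧ r < 1} => (1 - r.1) * ((p : ℝ) * 2 * ‖x‖) :=
      funext fun r => by ring
    rw [heq]; exact h
  refine ⟨⟨?_, ?_⟩, ?_⟩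
  · -- approximation by convex combinations
    intro r ε hε m xs
    obtain ⟨hρ0, hρ1⟩ := r.2
    set ρ : ℝ := r.1 with hρ
    have hgeo : Summable (fun n : ℕ => ρ ^ n) := summable_geometric_of_lt_one hρ0.le hρ1
    have hr1 : (0:ℝ) < 1 - ρ := by linarith
    set C : ℝ := 1 + ∑ k, ‖xs k‖ with hCdef
    have hC : 0 < C := by positivity
    have hCk : ∀ k, ‖xs k‖ ≤ C := fun k => by
      have h := Finset.single_le_sum (f := fun j => ‖xs j‖)
        (fun j _ => norm_nonneg _) (Finset.mem_univ k)
      rw [hCdef]; linarith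
    obtain ⟨N, hN⟩ := exists_pow_lt_of_lt_one (x := ε / (2 * C)) (by positivity) hρ1
    refine ⟨N + 1, fun j => j.1,
      fun _ j => if j.1 < N then (1 - ρ) * ρ ^ j.1 else ρ ^ N, ?_, ?_, ?_⟩
    · intro i j; dsimp only
      split
      · nlinarith [pow_nonneg hρ0.le j.1]
      · positivity
    · intro i
      rw [Fin.sum_univ_eq_sum_range (fun j => if j < N then (1 - ρ) * ρ ^ j else ρ ^ N) (N + 1)]
      rw [Finset.sum_range_succ, if_neg (lt_irrefl N),
        Finset.sum_congr rfl (fun j hj => if_pos (Finset.mem_range.1 hj)),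
        ← Finset.mul_sum, geom_sum_eq (ne_of_lt hρ1) N]
      have hne : ρ - 1 ≠ 0 := sub_ne_zero.2 (ne_of_lt hρ1)
      field_simp
      ring
    · intro l k
      set T : X →L[ℂ] X := l.1 • S with hT
      rw [auxA_apply (hTl l) hρ0 hρ1]
      have hfin : ∑ j : Fin (N + 1),
            (if j.1 < N then (1 - ρ) * ρ ^ j.1 else ρ ^ N) • (T ^ j.1) (xs k)
          = (∑ j ∈ Finset.range N, ((1 - ρ) * ρ ^ j) • (T ^ j) (xs k))
            + ρ ^ N • (T ^ N) (xs k) := by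
        rw [Fin.sum_univ_eq_sum_range
          (fun j => (if j < N then (1 - ρ) * ρ ^ j else ρ ^ N) • (T ^ j) (xs k)) (N + 1)]
        rw [Finset.sum_range_succ, if_neg (lt_irrefl N)]
        congr 1
        exact Finset.sum_congr rfl fun j hj => by rw [if_pos (Finset.mem_range.1 hj)]
      rw [hfin]
      have hsum : Summable (fun n : ℕ => ((1 - ρ) * ρ ^ n) • (T ^ n) (xs k)) :=
        auxA_summable_vec (hTl l) (hgeo.mul_left _) (fun n => n) (xs k)
      have hsplit := Summable.sum_add_tsum_nat_add N hsum
      have hdiff : (∑' n : ℕ, ((1 - ρ) * ρ ^ n) • (T ^ n) (xs k))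
            - ((∑ j ∈ Finset.range N, ((1 - ρ) * ρ ^ j) • (T ^ j) (xs k))
              + ρ ^ N • (T ^ N) (xs k))
          = (∑' n : ℕ, ((1 - ρ) * ρ ^ (n + N)) • (T ^ (n + N)) (xs k))
            - ρ ^ N • (T ^ N) (xs k) := by
        rw [← hsplit]; abel
      rw [hdiff]
      have bt : ‖∑' n : ℕ, ((1 - ρ) * ρ ^ (n + N)) • (T ^ (n + N)) (xs k)‖
          ≤ ρ ^ N * ‖xs k‖ := by
        have hb := auxA_tsum_bound (hTl l) (c := fun n => ((1 - ρ) * ρ ^ N) * ρ ^ n)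
          (hgeo.mul_left _) (d := fun n => (1 - ρ) * ρ ^ (n + N))
          (fun n => by
            rw [abs_of_nonneg (by positivity)]
            exact le_of_eq (by show (1 - ρ) * ρ ^ (n + N) = (1 - ρ) * ρ ^ N * ρ ^ n
                               rw [pow_add]; ring)) (fun n => n + N) (xs k)
        refine le_trans hb (le_of_eq ?_)
        rw [tsum_mul_left, tsum_geometric_of_lt_one hρ0.le hρ1]
        have hne : (1:ℝ) - ρ ≠ 0 := ne_of_gt hr1
        field_simp
      have b2 : ‖ρ ^ N • (T ^ N) (xs k)‖ ≤ ρ ^ N * ‖xs k‖ := by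
        refine le_trans (norm_smul_le (β := X) _ _) ?_
        rw [Real.norm_eq_abs, abs_of_nonneg (by positivity)]
        exact mul_le_mul_of_nonneg_left (auxA_pow_apply_le (hTl l) N (xs k)) (by positivity)
      refine lt_of_le_of_lt (le_trans (norm_sub_le _ _) (add_le_add bt b2)) ?_
      have h1 : ρ ^ N * ‖xs k‖ ≤ ρ ^ N * C :=
        mul_le_mul_of_nonneg_left (hCk k) (by positivity)
      have h3 : ρ ^ N * (2 * C) < ε := (lt_div_iff₀ (by positivity)).1 hN
      nlinarith [h1, h3]
  · -- right ergodicity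
    intro p x
    exact tend p x
  · -- left ergodicity
    intro p x
    refine Tendsto.congr (fun r => ?_) (tend p x)
    refine iSup_congr fun l => ?_
    have h1 : ((1 - r.1) • ∑' n : ℕ, r.1 ^ n • (l.1 • S) ^ n) (((l.1 • S) ^ p) x)
        = ((l.1 • S) ^ p) (((1 - r.1) • ∑' n : ℕ, r.1 ^ n • (l.1 • S) ^ n) x) := by
      rw [auxA_apply (hTl l) r.2.1 r.2.2 (((l.1 • S) ^ p) x),
        auxA_comm (hTl l) r.2.1 r.2.2 p x, ← auxA_apply (hTl l) r.2.1 r.2.2 x]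
    beta_reduce
    rw [h1]
end
end

section
/- Let the semigroup G be represented on the complex Banach space X by uniformly bounded semigroups 𝒮_i = {S_{i,g} : g ∈ G}, i ∈ I, and let {(A_α^{𝒮_i})_{α∈𝒜} : i ∈ I} be a uniform family of right ergodic nets. Then for every β ∈ 𝒜 and every x ∈ X, limsup_α sup_{i∈I} ‖A_α^{𝒮_i} x − A_α^{𝒮_i} A_β^{𝒮_i} x‖ = 0. -/
open Filter Topology

noncomputable section

/-- Lemma 2.5. If `{(A_α^{𝒮_i})_α : i ∈ I}` is a uniform family of
right ergodic nets for uniformly bounded representations `𝒮_i` of `G` on `X`, then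
`limsup_α sup_i ‖A_α^{𝒮_i} x - A_α^{𝒮_i} A_β^{𝒮_i} x‖ = 0` for every `β` and `x`. -/
theorem uniformFamily_asymptotic_idempotence
    {I G X 𝒜 : Type} [Semigroup G] [TopologicalSpace G]
    [NormedAddCommGroup X] [NormedSpace ℂ X] [CompleteSpace X]
    [Preorder 𝒜] [Nonempty 𝒜] [IsDirected 𝒜 (· ≤ ·)]
    (S : I → G → (X →L[ℂ] X))
    (hGcont₁ : ∀ g : G, Continuous fun h : G => g * h)
    (hGcont₂ : ∀ g : G, Continuous fun h : G => h * g)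
    (hbdd : ∃ C : ℝ, ∀ (i : I) (g : G), ‖S i g‖ ≤ C)
    (hmul : ∀ (i : I) (g h : G), (S i g).comp (S i h) = S i (h * g))
    (hScont : ∀ (i : I) (x : X), Continuous fun g : G => S i g x)
    (A : I → 𝒜 → (X →L[ℂ] X))
    (hA : UniformFamilyRightErgodic S A) :
    ∀ (β : 𝒜) (x : X),
      Tendsto (fun α : 𝒜 => ⨆ i : I, ‖A i α x - A i α (A i β x)‖) atTop (nhds 0) := by
  classical
  cases isEmpty_or_nonempty I with
  | inl hI =>
    intro β x
    have : (fun α : 𝒜 => ⨆ i : I, ‖A i α x - A i α (A i β x)‖) = fun _ => 0 := by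
      funext α; exact Real.iSup_of_isEmpty _
    rw [this]; exact tendsto_const_nhds
  | inr hI =>
  obtain ⟨C₀, hC₀⟩ := hbdd
  set C : ℝ := max C₀ 1 with hCdef
  have hC1 : (1:ℝ) ≤ C := le_max_right _ _
  have hC0 : (0:ℝ) < C := lt_of_lt_of_le one_pos hC1
  have hSC : ∀ i g, ‖S i g‖ ≤ C := fun i g => (hC₀ i g).trans (le_max_left _ _)
  -- Step A: uniform bound on the A operators
  have hAbd : ∀ (i : I) (α : 𝒜) (y : X), ‖A i α y‖ ≤ C * ‖y‖ := by
    intro i α y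
    refine le_of_forall_pos_le_add ?_
    intro δ hδ
    obtain ⟨N, g, c, hcpos, hcsum, happ⟩ := hA.1 α δ hδ 1 (fun _ => y)
    have h1 := happ i 0
    have hb : ‖∑ j, c i j • S i (g j) y‖ ≤ C * ‖y‖ := by
      calc ‖∑ j, c i j • S i (g j) y‖ ≤ ∑ j, ‖c i j • S i (g j) y‖ := norm_sum_le _ _
        _ ≤ ∑ j, c i j * (C * ‖y‖) := by
            refine Finset.sum_le_sum fun j _ => ?_
            rw [norm_smul, Real.norm_eq_abs, abs_of_nonneg (hcpos i j)]
            exact mul_le_mul_of_nonneg_left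
              (((S i (g j)).le_opNorm y).trans
                (mul_le_mul_of_nonneg_right (hSC i (g j)) (norm_nonneg y)))
              (hcpos i j)
        _ = C * ‖y‖ := by rw [← Finset.sum_mul, hcsum i, one_mul]
    calc ‖A i α y‖ ≤ ‖A i α y - ∑ j, c i j • S i (g j) y‖ + ‖∑ j, c i j • S i (g j) y‖ := by
          simpa using norm_add_le (A i α y - ∑ j, c i j • S i (g j) y) (∑ j, c i j • S i (g j) y)
      _ ≤ δ + C * ‖y‖ := add_le_add h1.le hb
      _ = C * ‖y‖ + δ := add_comm _ _
  intro β x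
  rw [Metric.tendsto_nhds]
  intro ε hε
  -- approximate A β by a convex combination, with accuracy ε/(2C)
  have hδ : 0 < ε / (2 * C) := div_pos hε (by linarith)
  obtain ⟨N, g, c, hcpos, hcsum, happ⟩ := hA.1 β (ε / (2 * C)) hδ 1 (fun _ => x)
  set h : Fin N → 𝒜 → ℝ := fun j α => ⨆ i : I, ‖A i α x - A i α (S i (g j) x)‖ with hh
  have hbdd' : ∀ (j : Fin N) (α : 𝒜),
      BddAbove (Set.range fun i : I => ‖A i α x - A i α (S i (g j) x)‖) := by
    intro j α
    refine ⟨C * ‖x‖ + C * (C * ‖x‖), ?_⟩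
    rintro r ⟨i, rfl⟩
    calc ‖A i α x - A i α (S i (g j) x)‖ ≤ ‖A i α x‖ + ‖A i α (S i (g j) x)‖ := norm_sub_le _ _
      _ ≤ C * ‖x‖ + C * (C * ‖x‖) := by
          refine add_le_add (hAbd i α x) ((hAbd i α _).trans ?_)
          refine mul_le_mul_of_nonneg_left ?_ hC0.le
          exact ((S i (g j)).le_opNorm x).trans
            (mul_le_mul_of_nonneg_right (hSC i (g j)) (norm_nonneg x))
  have hhnn : ∀ (j : Fin N) (α : 𝒜), 0 ≤ h j α := by
    intro j α
    exact Real.iSup_nonneg fun i => norm_nonneg _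
  -- the sum of the h j tends to 0
  have hsum : Tendsto (fun α : 𝒜 => ∑ j, h j α) atTop (nhds 0) := by
    have := tendsto_finset_sum (Finset.univ : Finset (Fin N))
      (fun j _ => hA.2 (g j) x)
    simpa using this
  have hev : ∀ᶠ α in atTop, (∑ j, h j α) < ε / 2 :=
    hsum.eventually_lt_const (half_pos hε)
  filter_upwards [hev] with α hα
  have key : ∀ i : I, ‖A i α x - A i α (A i β x)‖ ≤ (∑ j, h j α) + ε / 2 := by
    intro i
    set w : X := ∑ j, c i j • S i (g j) x with hw
    have e1 : A i α x - A i α (A i β x)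
        = (∑ j, c i j • (A i α x - A i α (S i (g j) x))) + A i α (w - A i β x) := by
      rw [hw, map_sub]
      have : A i α (∑ j, c i j • S i (g j) x) = ∑ j, c i j • A i α (S i (g j) x) := by
        rw [map_sum]
        exact Finset.sum_congr rfl fun j _ => (A i α).map_smul_of_tower (c i j) _
      rw [this]
      have : (∑ j, c i j • (A i α x - A i α (S i (g j) x)))
          = A i α x - ∑ j, c i j • A i α (S i (g j) x) := by
        rw [Finset.sum_congr rfl fun j _ => smul_sub (c i j) (A i α x) (A i α (S i (g j) x)),
          Finset.sum_sub_distrib, ← Finset.sum_smul, hcsum i, one_smul]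
      rw [this]
      abel
    have t1 : ‖∑ j, c i j • (A i α x - A i α (S i (g j) x))‖ ≤ ∑ j, h j α := by
      calc ‖∑ j, c i j • (A i α x - A i α (S i (g j) x))‖
          ≤ ∑ j, ‖c i j • (A i α x - A i α (S i (g j) x))‖ := norm_sum_le _ _
        _ ≤ ∑ j, h j α := by
            refine Finset.sum_le_sum fun j _ => ?_
            rw [norm_smul, Real.norm_eq_abs, abs_of_nonneg (hcpos i j)]
            have hle : ‖A i α x - A i α (S i (g j) x)‖ ≤ h j α :=
              le_ciSup (hbdd' j α) i
            have hcle : c i j ≤ 1 := by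
              have := Finset.single_le_sum (f := c i) (fun k _ => hcpos i k)
                (Finset.mem_univ j)
              rw [hcsum i] at this; exact this
            calc c i j * ‖A i α x - A i α (S i (g j) x)‖
                ≤ 1 * (h j α) := mul_le_mul hcle hle (norm_nonneg _) zero_le_one
              _ = h j α := one_mul _
    have t2 : ‖A i α (w - A i β x)‖ ≤ ε / 2 := by
      have := hAbd i α (w - A i β x)
      have hwle : ‖w - A i β x‖ ≤ ε / (2 * C) := by
        rw [norm_sub_rev]; exact (happ i 0).le
      calc ‖A i α (w - A i β x)‖ ≤ C * ‖w - A i β x‖ := this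
        _ ≤ C * (ε / (2 * C)) := mul_le_mul_of_nonneg_left hwle hC0.le
        _ = ε / 2 := by field_simp
    calc ‖A i α x - A i α (A i β x)‖
        ≤ ‖∑ j, c i j • (A i α x - A i α (S i (g j) x))‖ + ‖A i α (w - A i β x)‖ := by
          rw [e1]; exact norm_add_le _ _
      _ ≤ (∑ j, h j α) + ε / 2 := add_le_add t1 t2
  have hsup : (⨆ i : I, ‖A i α x - A i α (A i β x)‖) ≤ (∑ j, h j α) + ε / 2 :=
    ciSup_le key
  have hnn : 0 ≤ ⨆ i : I, ‖A i α x - A i α (A i β x)‖ :=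
    Real.iSup_nonneg fun i => norm_nonneg _
  rw [Real.dist_eq, sub_zero, abs_of_nonneg hnn]
  calc (⨆ i : I, ‖A i α x - A i α (A i β x)‖) ≤ (∑ j, h j α) + ε / 2 := hsup
    _ < ε / 2 + ε / 2 := by linarith
    _ = ε := by ring
end
end
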